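/- arXiv:2405.08232 — 2 statements merged into one kernel-verified Lean document; each statement's English description precedes it below -/
import Mathlib

section
/- For fixed energy e (ē_lower = ē_upper = e), the flexibility set {u ∈ ℝ^T : 0 ≤ u_t ≤ m ∀t, ∑_t u_t = e} equals the permutahedron Π(v(e)), the convex hull of all permutations of the fastest-charging profile v(e). -/
/-
The flexibility set `F` is convex and contains every permutation of `v(e)`, so it contains
`Π(v(e))`. Conversely `F` is compact, hence by Krein–Milman the closed convex hull of its extreme
points. At an extreme point at most one coordinate lies strictly between `0` and `m`: otherwise
shifting a little mass between two such coordinates, in either direction, exhibits it as a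
midpoint. A vector of `F` with at most one such coordinate has exactly `⌊e/m⌋` coordinates equal
to `m`, the fractional one equal to `e - m⌊e/m⌋`, and zeros elsewhere, so its multiset of values
is that of `v(e)`, i.e. it is a permutation of `v(e)`. For the sum of `v(e)` note
`v(e)_t = min m (max 0 (e - m t))`, which telescopes.
-/

open Finset

/-- Fastest-charging profile: `m` for the first `⌊e/m⌋` coordinates,
`e - m⌊e/m⌋` in the next, `0` thereafter (0-based indexing). -/
noncomputable def vProf (T : ℕ) (m e : ℝ) : Fin T → ℝ :=
  fun t => if ((t : ℕ) : ℤ) < ⌊e / m⌋ then m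
    else if ((t : ℕ) : ℤ) = ⌊e / m⌋ then e - m * (⌊e / m⌋ : ℝ)
    else 0

/-- Partial sum of the first `s` coordinates of `x : Fin T → ℝ`. -/
noncomputable def pSum {T : ℕ} (x : Fin T → ℝ) (s : ℕ) : ℝ :=
  ∑ t : Fin T, if (t : ℕ) < s then x t else 0

/-- Permutahedron of `x`: convex hull of all coordinate permutations of `x`. -/
noncomputable def permSet {T : ℕ} (x : Fin T → ℝ) : Set (Fin T → ℝ) :=
  convexHull ℝ {y | ∃ π : Equiv.Perm (Fin T), y = x ∘ π}

def flexSet (ι : Type*) [Fintype ι] (m e : ℝ) : Set (ι → ℝ) :=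
  {u | (∀ t, 0 ≤ u t ∧ u t ≤ m) ∧ ∑ t, u t = e}

theorem eq_zero_of_add_mem_of_sub_mem_of_mem_extremePoints {𝕜 E : Type*} [Field 𝕜]
    [LinearOrder 𝕜] [IsStrictOrderedRing 𝕜] [AddCommGroup E] [Module 𝕜 E] {A : Set E} {x d : E}
    (hx : x ∈ A.extremePoints 𝕜) (hadd : x + d ∈ A) (hsub : x - d ∈ A) : d = 0 := by
  have hmid : x ∈ openSegment 𝕜 (x + d) (x - d) :=
    ⟨1 / 2, 1 / 2, by norm_num, by norm_num, by norm_num, by module⟩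
  simpa using (hx.2 hadd hsub hmid)

section flexSet

variable {ι : Type*} [Fintype ι] {m e : ℝ}

theorem convex_flexSet : Convex ℝ (flexSet ι m e) := by
  rintro x ⟨hx, hxe⟩ y ⟨hy, hye⟩ a b ha hb hab
  refine ⟨fun t => ⟨?_, ?_⟩, ?_⟩
  · simp only [Pi.add_apply, Pi.smul_apply, smul_eq_mul]
    nlinarith [hx t, hy t]
  · simp only [Pi.add_apply, Pi.smul_apply, smul_eq_mul]
    nlinarith [hx t, hy t]
  · simp only [Pi.add_apply, Pi.smul_apply, smul_eq_mul, sum_add_distrib, ← mul_sum, hxe, hye,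
      ← add_mul, hab, one_mul]

theorem isCompact_flexSet : IsCompact (flexSet ι m e) := by
  have : flexSet ι m e = (Set.univ.pi fun _ => Set.Icc 0 m) ∩ {u | ∑ t, u t = e} := by
    ext u; simp [flexSet, forall_and, Pi.le_def]
  rw [this]
  exact (isCompact_univ_pi fun _ => isCompact_Icc).inter_right
    (isClosed_eq (by fun_prop) continuous_const)

theorem comp_perm_mem_flexSet {u : ι → ℝ} (hu : u ∈ flexSet ι m e) (π : Equiv.Perm ι) :
    u ∘ π ∈ flexSet ι m e :=
  ⟨fun t => hu.1 (π t), (Equiv.sum_comp π u).trans hu.2⟩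

theorem add_mem_flexSet {u d : ι → ℝ} (hu : u ∈ flexSet ι m e) (hd : ∑ t, d t = 0)
    (hbound : ∀ t, |d t| ≤ u t ∧ |d t| ≤ m - u t) : u + d ∈ flexSet ι m e := by
  refine ⟨fun t => ?_, by simp [sum_add_distrib, hu.2, hd]⟩
  have := abs_le.1 (hbound t).1
  have := abs_le.1 (hbound t).2
  constructor <;> simp only [Pi.add_apply] <;> linarith

theorem subsingleton_of_mem_extremePoints_flexSet {u : ι → ℝ}
    (hu : u ∈ (flexSet ι m e).extremePoints ℝ) : {t | u t ∈ Set.Ioo 0 m}.Subsingleton := by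
  classical
  rintro s ⟨hs0, hsm⟩ t ⟨ht0, htm⟩
  by_contra hst
  set ε := min (min (u s) (m - u s)) (min (u t) (m - u t))
  have hε : 0 < ε := by simp only [ε, lt_min_iff, sub_pos]; exact ⟨⟨hs0, hsm⟩, ht0, htm⟩
  set d : ι → ℝ := Pi.single s ε - Pi.single t ε
  have hbound : ∀ r, |d r| ≤ u r ∧ |d r| ≤ m - u r := by
    intro r
    obtain ⟨hur0, hurm⟩ := hu.1.1 r
    by_cases hrs : r = s
    · subst hrs; simp [d, hst, abs_of_pos hε, ε]
    by_cases hrt : r = t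
    · subst hrt; simp [d, hrs, abs_of_pos hε, ε]
    · simp [d, hrs, hrt, hur0, hurm]
  have hd : ∑ r, d r = 0 := by simp [d, sum_sub_distrib]
  have hsub : u - d ∈ flexSet ι m e := by
    rw [sub_eq_add_neg]
    exact add_mem_flexSet hu.1 (by simp [hd]) (by simpa using hbound)
  have hzero := eq_zero_of_add_mem_of_sub_mem_of_mem_extremePoints hu
    (add_mem_flexSet hu.1 hd hbound) hsub
  have := congrFun hzero s
  simp [d, hst] at this
  exact hε.ne' this

end flexSet

theorem exists_perm_eq_comp_of_map_univ_val_eq {ι α : Type*} [Fintype ι] [DecidableEq α]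
    {u w : ι → α} (h : univ.val.map u = univ.val.map w) : ∃ π : Equiv.Perm ι, u = w ∘ π := by
  have hfiber : ∀ c, Fintype.card {t // u t = c} = Fintype.card {t // w t = c} := by
    intro c
    have := congrArg (Multiset.count c) h
    simp only [Multiset.count_map] at this
    simpa [Fintype.card_subtype, Finset.card, Finset.filter_val, eq_comm] using this
  let π := Equiv.ofFiberEquiv fun c => Fintype.equivOfCardEq (hfiber c)
  exact ⟨π, funext fun t => (Equiv.ofFiberEquiv_map _ t).symm⟩

theorem Nat.floor_div_eq_of_mem_Ico {m s : ℝ} (hm : 0 < m) (hs : s ∈ Set.Ico 0 m) (a : ℕ) :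
    ⌊(a * m + s) / m⌋₊ = a := by
  rw [add_div, mul_div_cancel_right₀ _ hm.ne', add_comm, Nat.floor_add_natCast
    (div_nonneg hs.1 hm.le), Nat.floor_eq_zero.2 ((div_lt_one hm).2 hs.2), zero_add]

namespace Multiset

variable {m : ℝ}

theorem eq_replicate_add_replicate_add_filter_Ioo (hm : 0 < m) {M : Multiset ℝ}
    (hM : ∀ x ∈ M, x ∈ Set.Icc 0 m) :
    M = replicate (count m M) m + replicate (count 0 M) 0 + M.filter (· ∈ Set.Ioo 0 m) := by
  rw [← filter_eq', ← filter_eq', add_assoc]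
  conv_lhs => rw [← filter_add_not (· = m) M]
  congr 1
  rw [← filter_add_not (· = 0) (M.filter (· ≠ m)), filter_filter, filter_filter]
  congr 1 <;> refine filter_congr fun x hx => ?_
  · constructor
    · exact fun h => h.1
    · rintro rfl; exact ⟨rfl, hm.ne⟩
  · have := hM x hx
    simp only [Set.mem_Ioo, Set.mem_Icc] at this ⊢
    constructor
    · rintro ⟨h0, hm'⟩; exact ⟨lt_of_le_of_ne this.1 (Ne.symm h0), lt_of_le_of_ne this.2 hm'⟩
    · rintro ⟨h0, hm'⟩; exact ⟨h0.ne', hm'.ne⟩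

theorem eq_zero_or_exists_eq_singleton_of_card_le_one {α : Type*} {P : Multiset α}
    (hP : card P ≤ 1) : P = 0 ∨ ∃ x, P = {x} := by
  rcases Nat.le_one_iff_eq_zero_or_eq_one.1 hP with h | h
  exacts [.inl (card_eq_zero.1 h), .inr (card_eq_one.1 h)]

theorem eq_of_card_le_one_of_sum_eq {P Q : Multiset ℝ} (hP : card P ≤ 1) (hQ : card Q ≤ 1)
    (hP0 : (0 : ℝ) ∉ P) (hQ0 : (0 : ℝ) ∉ Q) (h : P.sum = Q.sum) : P = Q := by
  rcases eq_zero_or_exists_eq_singleton_of_card_le_one hP with rfl | ⟨x, rfl⟩ <;>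
    rcases eq_zero_or_exists_eq_singleton_of_card_le_one hQ with rfl | ⟨y, rfl⟩ <;>
    simp_all [eq_comm]

theorem sum_mem_Ico_of_card_le_one {P : Multiset ℝ} (hm : 0 < m) (hP : card P ≤ 1)
    (hPm : ∀ x ∈ P, x ∈ Set.Ioo 0 m) : P.sum ∈ Set.Ico 0 m := by
  rcases eq_zero_or_exists_eq_singleton_of_card_le_one hP with rfl | ⟨x, rfl⟩
  · simp [hm]
  · simpa using Set.Ioo_subset_Ico_self (hPm x (mem_singleton_self x))

theorem eq_of_sum_eq_of_card_filter_Ioo_le_one (hm : 0 < m) {M N : Multiset ℝ}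
    (hcard : card M = card N) (hM : ∀ x ∈ M, x ∈ Set.Icc 0 m) (hN : ∀ x ∈ N, x ∈ Set.Icc 0 m)
    (hM1 : card (M.filter (· ∈ Set.Ioo 0 m)) ≤ 1) (hN1 : card (N.filter (· ∈ Set.Ioo 0 m)) ≤ 1)
    (hsum : M.sum = N.sum) : M = N := by
  have hdecM := eq_replicate_add_replicate_add_filter_Ioo hm hM
  have hdecN := eq_replicate_add_replicate_add_filter_Ioo hm hN
  have hsumM : M.sum = count m M * m + (M.filter (· ∈ Set.Ioo 0 m)).sum := by
    conv_lhs => rw [hdecM]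
    simp
  have hsumN : N.sum = count m N * m + (N.filter (· ∈ Set.Ioo 0 m)).sum := by
    conv_lhs => rw [hdecN]
    simp
  have hIcoM := sum_mem_Ico_of_card_le_one hm hM1 fun x hx => (mem_filter.1 hx).2
  have hIcoN := sum_mem_Ico_of_card_le_one hm hN1 fun x hx => (mem_filter.1 hx).2
  -- both counts of `m` equal `⌊sum / m⌋₊`
  have hcount_m : count m M = count m N := by
    rw [← Nat.floor_div_eq_of_mem_Ico hm hIcoM (count m M),
      ← Nat.floor_div_eq_of_mem_Ico hm hIcoN (count m N), ← hsumM, ← hsumN, hsum]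
  have hfrac : M.filter (· ∈ Set.Ioo 0 m) = N.filter (· ∈ Set.Ioo 0 m) :=
    eq_of_card_le_one_of_sum_eq hM1 hN1 (by simp) (by simp)
      (by rw [hcount_m] at hsumM; linarith)
  have hcount_0 : count 0 M = count 0 N := by
    have hM' := congrArg card hdecM
    have hN' := congrArg card hdecN
    simp only [card_add, card_replicate] at hM' hN'
    rw [hcount_m, hfrac, hcard, hN'] at hM'
    omega
  rw [hdecM, hdecN, hcount_m, hcount_0, hfrac]

end Multiset

section vProf

variable {T : ℕ} {m e : ℝ}

theorem vProf_eq_min_max (hm : 0 < m) (t : Fin T) :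
    vProf T m e t = min m (max 0 (e - m * t)) := by
  unfold vProf
  split_ifs with hlt heq
  · have : ((t : ℕ) : ℝ) + 1 ≤ e / m := by exact_mod_cast Int.le_floor.1 (Int.add_one_le_of_lt hlt)
    rw [le_div_iff₀ hm] at this
    rw [max_eq_right (by nlinarith), min_eq_left (by nlinarith)]
  · have h0 := Int.sub_floor_div_mul_nonneg e hm
    have h1 := Int.sub_floor_div_mul_lt e hm
    rw [← heq] at h0 h1 ⊢
    push_cast at h0 h1 ⊢
    rw [max_eq_right (by linarith), min_eq_right (by linarith)]
  · have : e / m < ((t : ℕ) : ℝ) := by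
      exact_mod_cast Int.floor_lt.1 (lt_of_le_of_ne (not_lt.1 hlt) (Ne.symm heq))
    rw [div_lt_iff₀ hm] at this
    rw [max_eq_left (by linarith), min_eq_right hm.le]

theorem min_max_eq_max_sub_max (hm : 0 ≤ m) (x : ℝ) :
    min m (max 0 x) = max 0 x - max 0 (x - m) := by
  rcases le_total x 0 with hx | hx
  · rw [max_eq_left hx, max_eq_left (by linarith), min_eq_right hm]; ring
  rcases le_total x m with hxm | hxm
  · rw [max_eq_right hx, max_eq_left (by linarith), min_eq_right hxm]; ring
  · rw [max_eq_right hx, max_eq_right (by linarith), min_eq_left hxm]; ring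

theorem sum_vProf (hm : 0 < m) (he0 : 0 ≤ e) (heT : e ≤ m * T) : ∑ t, vProf T m e t = e := by
  simp only [vProf_eq_min_max hm]
  rw [Fin.sum_univ_eq_sum_range (fun i => min m (max 0 (e - m * i)))]
  simp only [min_max_eq_max_sub_max hm.le]
  calc ∑ i ∈ range T, (max 0 (e - m * i) - max 0 (e - m * i - m))
      = ∑ i ∈ range T, (max 0 (e - m * i) - max 0 (e - m * ↑(i + 1))) := by
        congr! 3; push_cast; ring
    _ = e := by rw [sum_range_sub']; simp [max_eq_right he0, max_eq_left (sub_nonpos.2 heT)]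

theorem vProf_mem_Icc (hm : 0 < m) (t : Fin T) : vProf T m e t ∈ Set.Icc 0 m := by
  rw [vProf_eq_min_max hm]
  exact ⟨le_min hm.le (le_max_left _ _), min_le_left _ _⟩

theorem subsingleton_vProf_mem_Ioo (hm : 0 < m) :
    {t | vProf T m e t ∈ Set.Ioo 0 m}.Subsingleton := by
  have key : ∀ t : Fin T, vProf T m e t ∈ Set.Ioo 0 m → 0 < e - m * t ∧ e - m * t < m := by
    intro t ht
    rw [vProf_eq_min_max hm] at ht
    obtain ⟨h0, hm'⟩ := ht
    constructor
    · by_contra h; rw [max_eq_left (not_lt.1 h), min_eq_right hm.le] at h0; exact h0.false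
    · by_contra h; rw [max_eq_right (by linarith), min_eq_left (not_lt.1 h)] at hm'
      exact hm'.false
  intro s hs t ht
  obtain ⟨hs0, hsm⟩ := key s hs
  obtain ⟨ht0, htm⟩ := key t ht
  have hst : ((s : ℕ) : ℝ) < t + 1 := lt_of_mul_lt_mul_left (by linarith) hm.le
  have hts : ((t : ℕ) : ℝ) < s + 1 := lt_of_mul_lt_mul_left (by linarith) hm.le
  norm_cast at hst hts
  exact Fin.ext (by omega)

end vProf

theorem map_univ_val_eq_of_mem_flexSet {ι : Type*} [Fintype ι] {m e : ℝ} (hm : 0 < m)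
    {u w : ι → ℝ} (hu : u ∈ flexSet ι m e) (hw : w ∈ flexSet ι m e)
    (hu1 : {t | u t ∈ Set.Ioo 0 m}.Subsingleton) (hw1 : {t | w t ∈ Set.Ioo 0 m}.Subsingleton) :
    univ.val.map u = univ.val.map w := by
  have hIcc : ∀ {v : ι → ℝ}, v ∈ flexSet ι m e → ∀ x ∈ univ.val.map v, x ∈ Set.Icc 0 m := by
    intro v hv x hx
    obtain ⟨t, -, rfl⟩ := Multiset.mem_map.1 hx
    exact hv.1 t
  have hfrac : ∀ {v : ι → ℝ}, {t | v t ∈ Set.Ioo 0 m}.Subsingleton →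
      Multiset.card ((univ.val.map v).filter (· ∈ Set.Ioo 0 m)) ≤ 1 := by
    intro v hv
    rw [Multiset.filter_map, Multiset.card_map, ← filter_val, card_val]
    exact card_le_one.2 fun a ha b hb => hv (mem_filter.1 ha).2 (mem_filter.1 hb).2
  exact Multiset.eq_of_sum_eq_of_card_filter_Ioo_le_one hm (by simp) (hIcc hu) (hIcc hw)
    (hfrac hu1) (hfrac hw1) (hu.2.trans hw.2.symm)

theorem extremePoints_flexSet_subset {ι : Type*} [Fintype ι] {m e : ℝ} (hm : 0 < m)
    {w : ι → ℝ} (hw : w ∈ flexSet ι m e) (hw1 : {t | w t ∈ Set.Ioo 0 m}.Subsingleton) :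
    (flexSet ι m e).extremePoints ℝ ⊆ {u | ∃ π : Equiv.Perm ι, u = w ∘ π} := fun _ hu =>
  exists_perm_eq_comp_of_map_univ_val_eq <| map_univ_val_eq_of_mem_flexSet hm hu.1 hw
    (subsingleton_of_mem_extremePoints_flexSet hu) hw1

theorem isClosed_permSet {T : ℕ} (x : Fin T → ℝ) : IsClosed (permSet x) :=
  (((Set.finite_range fun π : Equiv.Perm (Fin T) => x ∘ π).subset
    (by rintro _ ⟨π, rfl⟩; exact ⟨π, rfl⟩)).isCompact_convexHull ℝ).isClosed

theorem fixedEnergy_flexSet_eq_permSet (T : ℕ) (m e : ℝ) (hm : 0 < m)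
    (he0 : 0 ≤ e) (heT : e ≤ m * T) :
    {u : Fin T → ℝ | (∀ t, 0 ≤ u t ∧ u t ≤ m) ∧ ∑ t, u t = e} =
      permSet (vProf T m e) := by
  change flexSet (Fin T) m e = _
  have hv : vProf T m e ∈ flexSet (Fin T) m e :=
    ⟨fun t => vProf_mem_Icc hm t, sum_vProf hm he0 heT⟩
  apply Set.Subset.antisymm
  · rw [← closure_convexHull_extremePoints isCompact_flexSet convex_flexSet]
    exact closure_minimal
      (convexHull_mono (extremePoints_flexSet_subset hm hv (subsingleton_vProf_mem_Ioo hm)))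
      (isClosed_permSet _)
  · exact convexHull_min (by rintro _ ⟨π, rfl⟩; exact comp_perm_mem_flexSet hv π) convex_flexSet
end

section
/- Pointwise intersection characterization of robust aggregate flexibility: if L and U are two vector pairs with F(L) = F(ν_L_low, ν_L_up) and F(U) = F(ν_U_low, ν_U_up) such that for every admissible population Ξ in the ambiguity set, ν_L_low is majorized by ν_low(Ξ) with larger total and ν_U_up majorized by ν_up(Ξ) with smaller total, then ⋂_Ξ F(ν_low(Ξ), ν_up(Ξ)) ⊇ F(ν_L_low, ν_U_up); that is, F(ν_L_low, ν_U_up) is contained in every F(ν_low(Ξ), ν_up(Ξ)). -/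
/-!
Every generator `μ_t(ν_L, ν_U)` is antitone, and its total lies between `∑ ν_low` and
`∑ ν_up`, the totals of the first and last generators of the target. A discrete intermediate
value argument therefore matches its total by a point `w` of the segment between two consecutive
target generators `μ_a, μ_{a+1}`; below index `a` both agree with `ν_up`, beyond it both agree
with `ν_low`, so the majorization hypotheses make the partial sums of `w` dominate those of
`μ_t(ν_L, ν_U)`. By Rado's theorem (separate by a linear functional, sort its coefficients, then
use the rearrangement inequality and summation by parts) `μ_t(ν_L, ν_U)` lies in the
permutahedron of `w`, which the convex, permutation-invariant target set contains.
-/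

open Finset

/-- Vertex generators `μ_t` built from lower/upper aggregate profiles. -/
noncomputable def muVert (T : ℕ) (νl νu : Fin T → ℝ) (t : Fin (T + 1)) : Fin T → ℝ :=
  fun s => if (t : ℕ) ≤ (s : ℕ) then νl s else νu s

/-- The flexibility-type set determined by lower/upper profiles. -/
noncomputable def flexHull (T : ℕ) (νl νu : Fin T → ℝ) : Set (Fin T → ℝ) :=
  convexHull ℝ {y | ∃ (t : Fin (T + 1)) (π : Equiv.Perm (Fin T)),
    y = (muVert T νl νu t) ∘ π}

theorem exists_castSucc_le_le_succ {α : Type*} [LinearOrder α] {n : ℕ} [NeZero n]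
    (f : Fin (n + 1) → α) {c : α} (h0 : f 0 ≤ c) (hn : c ≤ f (Fin.last n)) :
    ∃ a : Fin n, f a.castSucc ≤ c ∧ c ≤ f a.succ := by
  obtain ⟨m, rfl⟩ := Nat.exists_eq_succ_of_ne_zero (NeZero.ne n)
  induction m with
  | zero => exact ⟨0, h0, hn⟩
  | succ m ih =>
    by_cases h : c ≤ f (Fin.last (m + 1)).castSucc
    · obtain ⟨a, ha⟩ := ih (f ∘ Fin.castSucc) h0 h
      exact ⟨a.castSucc, ha.1, by rw [Fin.succ_castSucc]; exact ha.2⟩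
    · exact ⟨Fin.last _, le_of_not_ge h, by rwa [Fin.succ_last]⟩

section pSum

variable {T : ℕ} {x y : Fin T → ℝ}

theorem pSum_mono (h : x ≤ y) (k : ℕ) : pSum x k ≤ pSum y k :=
  sum_le_sum fun t _ => by split_ifs <;> simp [h t]

theorem pSum_eq_sum {k : ℕ} (hk : T ≤ k) : pSum x k = ∑ t, x t :=
  sum_congr rfl fun t _ => if_pos (t.isLt.trans_le hk)

theorem pSum_add (k : ℕ) : pSum (x + y) k = pSum x k + pSum y k := by
  simp only [pSum, ← sum_add_distrib]
  exact sum_congr rfl fun t _ => by split_ifs <;> simp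

theorem pSum_smul (a : ℝ) (k : ℕ) : pSum (a • x) k = a * pSum x k := by
  simp only [pSum, mul_sum]
  exact sum_congr rfl fun t _ => by split_ifs <;> simp

theorem sum_sub_pSum (k : ℕ) :
    ∑ t, x t - pSum x k = ∑ t : Fin T, if (t : ℕ) < k then 0 else x t := by
  simp only [pSum, ← sum_sub_distrib]
  exact sum_congr rfl fun t _ => by split_ifs <;> simp

theorem sum_sub_pSum_mono (h : x ≤ y) (k : ℕ) :
    ∑ t, x t - pSum x k ≤ ∑ t, y t - pSum y k := by
  simp only [sum_sub_pSum]
  exact sum_le_sum fun t _ => by split_ifs <;> simp [h t]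

theorem pSum_castSucc {z : Fin (T + 1) → ℝ} {k : ℕ} (hk : k ≤ T) :
    pSum (z ∘ Fin.castSucc) k = pSum z k := by
  simp [pSum, Fin.sum_univ_castSucc, hk.not_gt]

end pSum

theorem sum_mul_le_sum_mul_of_nonneg_of_pSum_le :
    ∀ {T : ℕ} {d y w : Fin T → ℝ}, Antitone d → 0 ≤ d →
      (∀ k ≤ T, pSum y k ≤ pSum w k) → ∑ i, d i * y i ≤ ∑ i, d i * w i
  | 0, _, _, _, _, _, _ => by simp
  | n + 1, d, y, w, hd, hd0, h => by
    have hpeel (z : Fin (n + 1) → ℝ) : ∑ i, d i * z i =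
        ∑ i : Fin n, (d i.castSucc - d (Fin.last n)) * z i.castSucc
          + d (Fin.last n) * ∑ i, z i := by
      simp only [Fin.sum_univ_castSucc, sub_mul, sum_sub_distrib, mul_add, mul_sum]
      ring
    rw [hpeel y, hpeel w]
    refine add_le_add (sum_mul_le_sum_mul_of_nonneg_of_pSum_le
      (fun i j hij => sub_le_sub_right (hd (Fin.castSucc_le_castSucc_iff.2 hij)) _)
      (fun i => sub_nonneg.2 (hd (Fin.le_last _))) fun k hk => ?_) ?_
    · exact (pSum_castSucc hk).le.trans ((h k (hk.trans n.le_succ)).trans (pSum_castSucc hk).ge)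
    · simpa only [pSum_eq_sum le_rfl] using
        mul_le_mul_of_nonneg_left (h (n + 1) le_rfl) (hd0 (Fin.last n))

theorem sum_mul_le_sum_mul_of_pSum_le {T : ℕ} {d y w : Fin T → ℝ} (hd : Antitone d)
    (h : ∀ k < T, pSum y k ≤ pSum w k) (hsum : ∑ i, y i = ∑ i, w i) :
    ∑ i, d i * y i ≤ ∑ i, d i * w i := by
  rcases T with _ | n
  · simp
  set m := d (Fin.last n)
  have hle : ∀ k ≤ n + 1, pSum y k ≤ pSum w k := fun k hk =>
    hk.lt_or_eq.elim (h k) fun hk => by rw [pSum_eq_sum hk.ge, pSum_eq_sum hk.ge, hsum]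
  have key := sum_mul_le_sum_mul_of_nonneg_of_pSum_le (d := fun i => d i - m)
    (fun i j hij => sub_le_sub_right (hd hij) m) (fun i => sub_nonneg.2 (hd (Fin.le_last i))) hle
  simp only [sub_mul, sum_sub_distrib, ← mul_sum, hsum] at key
  linarith

theorem mem_permSet_of_pSum_le {T : ℕ} {y w : Fin T → ℝ} (hy : Antitone y)
    (h : ∀ k < T, pSum y k ≤ pSum w k) (hsum : ∑ i, y i = ∑ i, w i) : y ∈ permSet w := by
  classical
  by_contra hyw
  have hclosed : IsClosed (permSet w) :=
    (((Set.finite_range fun π : Equiv.Perm (Fin T) => w ∘ π).subset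
      (by rintro _ ⟨π, rfl⟩; exact ⟨π, rfl⟩)).isCompact_convexHull ℝ).isClosed
  obtain ⟨f, u, hfw, hfy⟩ :=
    geometric_hahn_banach_closed_point (convex_convexHull ℝ _) hclosed hyw
  set c : Fin T → ℝ := fun i => f fun j => if i = j then 1 else 0
  have hf (x : Fin T → ℝ) : f x = ∑ i, c i * x i := by
    simp only [c, mul_comm (c _)]
    exact (f : (Fin T → ℝ) →ₗ[ℝ] ℝ).pi_apply_eq_sum_univ x
  set σ := Tuple.sort (OrderDual.toDual ∘ c)
  have hc : Antitone (c ∘ σ) := Tuple.monotone_sort (OrderDual.toDual ∘ c)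
  have : f y < u := calc
    f y = ∑ i, (c ∘ σ) i * y (σ i) := by rw [hf, ← Equiv.sum_comp σ]; rfl
    _ ≤ ∑ i, (c ∘ σ) i * y i := (hc.monovary hy).sum_mul_comp_perm_le_sum_mul
    _ ≤ ∑ i, (c ∘ σ) i * w i := sum_mul_le_sum_mul_of_pSum_le hc h hsum
    _ = f (w ∘ σ.symm) := by
      rw [hf, ← Equiv.sum_comp σ (fun j => c j * (w ∘ σ.symm) j)]
      simp
    _ < u := hfw _ (subset_convexHull ℝ _ ⟨σ.symm, rfl⟩)
  exact lt_asymm this hfy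

section flexHull

variable {T : ℕ} {l u L U : Fin T → ℝ}

theorem muVert_zero : muVert T l u 0 = l := by
  ext s
  simp [muVert]

theorem muVert_last : muVert T l u (Fin.last T) = u :=
  funext fun s => if_neg (not_le.2 s.isLt)

theorem antitone_muVert (hl : Antitone l) (hu : Antitone u) (hlu : l ≤ u) (t : Fin (T + 1)) :
    Antitone (muVert T l u t) := by
  intro i j hij
  unfold muVert
  split_ifs with hi hj hj
  · exact hl hij
  · exact (hlu j).trans (hu hij)
  · exact absurd (hj.trans (Fin.le_iff_val_le_val.1 hij)) hi
  · exact hu hij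

theorem le_muVert (hlu : l ≤ u) (t : Fin (T + 1)) : l ≤ muVert T l u t := fun s => by
  unfold muVert
  split_ifs
  exacts [le_rfl, hlu s]

theorem muVert_le (hlu : l ≤ u) (t : Fin (T + 1)) : muVert T l u t ≤ u := fun s => by
  unfold muVert
  split_ifs
  exacts [hlu s, le_rfl]

theorem pSum_muVert_of_le {t : Fin (T + 1)} {k : ℕ} (h : k ≤ t) :
    pSum (muVert T l u t) k = pSum u k :=
  sum_congr rfl fun s _ => by unfold muVert; split_ifs <;> first | rfl | omega

theorem sum_sub_pSum_muVert_of_le {t : Fin (T + 1)} {k : ℕ} (h : (t : ℕ) ≤ k) :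
    ∑ s, muVert T l u t s - pSum (muVert T l u t) k = ∑ s, l s - pSum l k := by
  simp only [sum_sub_pSum]
  exact sum_congr rfl fun s _ => by unfold muVert; split_ifs <;> first | rfl | omega

theorem muVert_mem_flexHull (t : Fin (T + 1)) : muVert T l u t ∈ flexHull T l u :=
  subset_convexHull ℝ _ ⟨t, 1, rfl⟩

theorem comp_perm_mem_flexHull {x : Fin T → ℝ} (hx : x ∈ flexHull T l u)
    (π : Equiv.Perm (Fin T)) : x ∘ π ∈ flexHull T l u := by
  have : flexHull T l u ⊆ LinearMap.funLeft ℝ ℝ π ⁻¹' flexHull T l u :=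
    convexHull_min
      (by rintro _ ⟨t, σ, rfl⟩; exact subset_convexHull ℝ _ ⟨t, π.trans σ, rfl⟩)
      ((convex_convexHull ℝ _).linear_preimage _)
  exact this hx

theorem permSet_subset_flexHull {w : Fin T → ℝ} (hw : w ∈ flexHull T l u) :
    permSet w ⊆ flexHull T l u :=
  convexHull_min (by rintro _ ⟨π, rfl⟩; exact comp_perm_mem_flexHull hw π)
    (convex_convexHull ℝ _)

theorem muVert_mem_flexHull_of_majorized (hL : Antitone L) (hU : Antitone U) (hLU : L ≤ U)
    (hsumL : ∑ t, l t ≤ ∑ t, L t) (hsumU : ∑ t, U t ≤ ∑ t, u t)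
    (hmajL : ∀ s ≤ T, pSum L s ≤ pSum l s) (hmajU : ∀ s ≤ T, pSum U s ≤ pSum u s)
    (t : Fin (T + 1)) : muVert T L U t ∈ flexHull T l u := by
  rcases eq_or_ne T 0 with rfl | hT
  · rw [Subsingleton.elim (muVert 0 L U t) (muVert 0 l u 0)]
    exact muVert_mem_flexHull 0
  have : NeZero T := ⟨hT⟩
  set Y := muVert T L U t
  set S : Fin (T + 1) → ℝ := fun r => ∑ s, muVert T l u r s
  obtain ⟨a, ha, ha'⟩ := exists_castSucc_le_le_succ S (c := ∑ s, Y s)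
    (by simpa only [S, muVert_zero] using hsumL.trans (sum_le_sum fun s _ => le_muVert hLU t s))
    (by simpa only [S, muVert_last] using (sum_le_sum fun s _ => muVert_le hLU t s).trans hsumU)
  obtain ⟨θa, θb, hθa, hθb, hθ, hθY⟩ :
      ∑ s, Y s ∈ segment ℝ (S a.castSucc) (S a.succ) := by
    rw [segment_eq_Icc (ha.trans ha')]
    exact ⟨ha, ha'⟩
  simp only [smul_eq_mul] at hθY
  set μa := muVert T l u a.castSucc
  set μb := muVert T l u a.succ
  have hw : θa • μa + θb • μb ∈ flexHull T l u :=
    (convex_convexHull ℝ _).segment_subset (muVert_mem_flexHull _) (muVert_mem_flexHull _)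
      ⟨θa, θb, hθa, hθb, hθ, rfl⟩
  refine permSet_subset_flexHull hw
    (mem_permSet_of_pSum_le (antitone_muVert hL hU hLU t) (fun k hk => ?_) ?_)
  · rw [pSum_add, pSum_smul, pSum_smul]
    rcases le_or_gt k a with hka | hak
    · rw [pSum_muVert_of_le (t := a.castSucc) (by simpa using hka),
        pSum_muVert_of_le (t := a.succ) (by simp; omega), ← add_mul, hθ, one_mul]
      exact (pSum_mono (muVert_le hLU t) k).trans (hmajU k hk.le)
    · have hYL := sum_sub_pSum_mono (le_muVert hLU t) k
      have hμa := sum_sub_pSum_muVert_of_le (l := l) (u := u) (t := a.castSucc) (k := k)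
        (by simpa using hak.le)
      have hμb := sum_sub_pSum_muVert_of_le (l := l) (u := u) (t := a.succ) (k := k)
        (by simpa using hak)
      calc pSum Y k ≤ ∑ s, Y s - (∑ s, l s - pSum l k) := by linarith [hmajL k hk.le]
        _ = θa * pSum μa k + θb * pSum μb k := by
          rw [← hθY]
          linear_combination θa * hμa + θb * hμb + (∑ s, l s - pSum l k) * hθ
  · simp only [Pi.add_apply, Pi.smul_apply, smul_eq_mul, sum_add_distrib, ← mul_sum]
    exact hθY.symm

theorem flexHull_subset_flexHull_of_majorized (hL : Antitone L) (hU : Antitone U) (hLU : L ≤ U)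
    (hsumL : ∑ t, l t ≤ ∑ t, L t) (hsumU : ∑ t, U t ≤ ∑ t, u t)
    (hmajL : ∀ s ≤ T, pSum L s ≤ pSum l s) (hmajU : ∀ s ≤ T, pSum U s ≤ pSum u s) :
    flexHull T L U ⊆ flexHull T l u :=
  convexHull_min (by
    rintro _ ⟨t, π, rfl⟩
    exact comp_perm_mem_flexHull
      (muVert_mem_flexHull_of_majorized hL hU hLU hsumL hsumU hmajL hmajU t) π)
    (convex_convexHull ℝ _)

end flexHull

theorem robust_flexSet_subset_general {ι : Type*} (T : ℕ)
    (νlow νup : ι → Fin T → ℝ)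
    (νL νU : Fin T → ℝ) (hνL : Antitone νL) (hνU : Antitone νU) (hLU : νL ≤ νU)
    (hsumL : ∀ Ξ, ∑ t, νlow Ξ t ≤ ∑ t, νL t)
    (hsumU : ∀ Ξ, ∑ t, νU t ≤ ∑ t, νup Ξ t)
    (hmajL : ∀ Ξ, ∀ s ≤ T, pSum νL s ≤ pSum (νlow Ξ) s)
    (hmajU : ∀ Ξ, ∀ s ≤ T, pSum νU s ≤ pSum (νup Ξ) s) :
    ∀ Ξ, flexHull T νL νU ⊆ flexHull T (νlow Ξ) (νup Ξ) := fun Ξ =>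
  flexHull_subset_flexHull_of_majorized hνL hνU hLU (hsumL Ξ) (hsumU Ξ) (hmajL Ξ) (hmajU Ξ)

theorem robust_flexSet_subset {ι : Type*} (T : ℕ)
    (νlow νup : ι → Fin T → ℝ)
    (hlow : ∀ Ξ, Antitone (νlow Ξ)) (hup : ∀ Ξ, Antitone (νup Ξ))
    (hlu : ∀ Ξ, νlow Ξ ≤ νup Ξ)
    (νL νU : Fin T → ℝ) (hνL : Antitone νL) (hνU : Antitone νU) (hLU : νL ≤ νU)
    (hsumL : ∀ Ξ, ∑ t, νlow Ξ t ≤ ∑ t, νL t)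
    (hsumU : ∀ Ξ, ∑ t, νU t ≤ ∑ t, νup Ξ t)
    (hmajL : ∀ Ξ, ∀ s ≤ T, pSum νL s ≤ pSum (νlow Ξ) s)
    (hmajU : ∀ Ξ, ∀ s ≤ T, pSum νU s ≤ pSum (νup Ξ) s) :
    ∀ Ξ, flexHull T νL νU ⊆ flexHull T (νlow Ξ) (νup Ξ) :=
  robust_flexSet_subset_general T νlow νup νL νU hνL hνU hLU hsumL hsumU hmajL hmajU
end
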